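/- Let C(G_1, …, G_n) be the chain of pairwise disjoint connected graphs G_1, …, G_n with respect to vertices x_i, y_i ∈ V(G_i), obtained by identifying y_i with x_{i+1} for i = 1, …, n−1. Then Mo(C(G_1, …, G_n)) ≤ Σ_{i=1}^{n} Mo(G_i) + Σ_{i=1}^{n} |E(G_i)|·(|V(G)| − |V(G_i)|), where G = C(G_1, …, G_n). -/

import Mathlib

open Finset

section MostarDefs

variable {V : Type*}

/-- Number of vertices of `G` strictly closer to `u` than to `v`. -/
noncomputable def closerCount (G : SimpleGraph V) (u v : V) : ℕ :=
  Nat.card {w : V // G.dist w u < G.dist w v}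

/-- Contribution `|n_u - n_v|` of an edge, as a symmetric function on `Sym2 V`. -/
noncomputable def mostarTerm (G : SimpleGraph V) : Sym2 V → ℕ :=
  Sym2.lift ⟨fun u v => ((closerCount G u v : ℤ) - closerCount G v u).natAbs,
    fun u v => by dsimp only; omega⟩

/-- The Mostar index of a finite graph. -/
noncomputable def mostar (G : SimpleGraph V) [Finite V] : ℕ :=
  letI := Fintype.ofFinite V
  letI := Classical.decEq V
  letI := Classical.decRel G.Adj
  ∑ e ∈ G.edgeFinset, mostarTerm G e

/-- Distance from a vertex `w` to an edge, as min over the endpoints. -/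
noncomputable def vertexEdgeDist (G : SimpleGraph V) (w : V) : Sym2 V → ℕ :=
  Sym2.lift ⟨fun x y => min (G.dist x w) (G.dist y w), fun _ _ => min_comm _ _⟩

/-- Number of edges of `G` strictly closer to `u` than to `v`. -/
noncomputable def edgeCloserCount (G : SimpleGraph V) (u v : V) : ℕ :=
  Nat.card {e : Sym2 V // e ∈ G.edgeSet ∧ vertexEdgeDist G u e < vertexEdgeDist G v e}

/-- Contribution `|m_u - m_v|` of an edge, as a symmetric function on `Sym2 V`. -/
noncomputable def emostarTerm (G : SimpleGraph V) : Sym2 V → ℕ :=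
  Sym2.lift ⟨fun u v => ((edgeCloserCount G u v : ℤ) - edgeCloserCount G v u).natAbs,
    fun u v => by dsimp only; omega⟩

/-- The edge Mostar index of a finite graph. -/
noncomputable def emostar (G : SimpleGraph V) [Finite V] : ℕ :=
  letI := Fintype.ofFinite V
  letI := Classical.decEq V
  letI := Classical.decRel G.Adj
  ∑ e ∈ G.edgeFinset, emostarTerm G e

end MostarDefs

/-- The chain `C(G 0, …, G (n-1))` of the graphs `G i` with respect to the vertices
`x i, y i`, obtained by identifying `y i` with `x (i+1)`.  The identified vertex is
represented at level `i` (as `y i`), so that level `i ≥ 1` omits `x i`. -/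
def chainGraph (n : ℕ) (V : ℕ → Type*) (G : ∀ i, SimpleGraph (V i)) (x y : ∀ i, V i) :
    SimpleGraph ((i : Fin n) × {v : V i.val // i.val = 0 ∨ v ≠ x i.val}) where
  Adj p q :=
    (∃ (i : Fin n) (a b : {v : V i.val // i.val = 0 ∨ v ≠ x i.val}),
      (G i.val).Adj a.1 b.1 ∧ p = ⟨i, a⟩ ∧ q = ⟨i, b⟩) ∨
    (∃ (i j : Fin n) (a : {v : V i.val // i.val = 0 ∨ v ≠ x i.val})
      (b : {v : V j.val // j.val = 0 ∨ v ≠ x j.val}),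
      j.val = i.val + 1 ∧ a.1 = y i.val ∧ (G j.val).Adj (x j.val) b.1 ∧
      ((p = ⟨i, a⟩ ∧ q = ⟨j, b⟩) ∨ (p = ⟨j, b⟩ ∧ q = ⟨i, a⟩)))
  symm := by
    constructor
    rintro p q (⟨i, a, b, h, rfl, rfl⟩ | ⟨i, j, a, b, hj, ha, hb, (⟨rfl, rfl⟩ | ⟨rfl, rfl⟩)⟩)
    · exact Or.inl ⟨i, b, a, h.symm, rfl, rfl⟩
    · exact Or.inr ⟨i, j, a, b, hj, ha, hb, Or.inr ⟨rfl, rfl⟩⟩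
    · exact Or.inr ⟨i, j, a, b, hj, ha, hb, Or.inl ⟨rfl, rfl⟩⟩
  loopless := by
    constructor
    rintro p (⟨i, a, b, h, rfl, hab⟩ |
      ⟨i, j, a, b, hj, ha, hb, (⟨rfl, hab⟩ | ⟨rfl, hab⟩)⟩)
    · obtain rfl : a = b := by simpa using hab
      exact (G i.val).irrefl h
    · have : i = j := congrArg Sigma.fst hab
      omega
    · have : j = i := congrArg Sigma.fst hab
      omega


/-!
Each `G i` sits isometrically in the chain: the inclusion is a graph homomorphism, and the
retraction that collapses all earlier blocks onto `x i` and all later ones onto `y i` maps edges to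
edges or single vertices, so neither map increases distances. Hence for an edge `uv` of `G i` the
vertices of `G i` split between `u` and `v` exactly as in `G i`, and the remaining
`|V(G)| - |V(G i)|` vertices change `|n_u - n_v|` by at most their number. Summing over the edges
of the chain, which are the disjoint union of the edges of the `G i`, gives the bound.
-/

namespace SimpleGraph

variable {α β : Type*} {A : SimpleGraph α} {B : SimpleGraph β}

lemma Walk.exists_length_le_of_adj_or_eq (f : α → β)
    (hf : ∀ ⦃u v⦄, A.Adj u v → B.Adj (f u) (f v) ∨ f u = f v) {u v : α} (p : A.Walk u v) :
    ∃ q : B.Walk (f u) (f v), q.length ≤ p.length := by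
  induction p with
  | nil => exact ⟨.nil, le_rfl⟩
  | cons h _ ih =>
    obtain ⟨q, hq⟩ := ih
    rcases hf h with hadj | heq
    · exact ⟨.cons hadj q, by simpa using hq⟩
    · exact ⟨q.copy heq.symm rfl, by simp only [Walk.length_copy, Walk.length_cons]; omega⟩

lemma dist_le_of_adj_or_eq (f : α → β)
    (hf : ∀ ⦃u v⦄, A.Adj u v → B.Adj (f u) (f v) ∨ f u = f v) {u v : α}
    (h : A.Reachable u v) : B.dist (f u) (f v) ≤ A.dist u v := by
  obtain ⟨p, hp⟩ := h.exists_walk_length_eq_dist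
  obtain ⟨q, hq⟩ := p.exists_length_le_of_adj_or_eq f hf
  exact (dist_le q).trans (hp ▸ hq)

end SimpleGraph

open Function

section Mostar

variable {α β : Type*} {A : SimpleGraph α} {B : SimpleGraph β} {f : α → β}

lemma closerCount_eq_ncard (G : SimpleGraph α) (u v : α) :
    closerCount G u v = {w | G.dist w u < G.dist w v}.ncard :=
  rfl

lemma closerCount_eq_add_of_isometry [Finite β] (hf : Injective f)
    (hd : ∀ u v, B.dist (f u) (f v) = A.dist u v) (u v : α) :
    closerCount B (f u) (f v) =
      closerCount A u v + {p | B.dist p (f u) < B.dist p (f v) ∧ p ∉ Set.range f}.ncard := by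
  have himage : {p | B.dist p (f u) < B.dist p (f v)} ∩ Set.range f =
      f '' {w | A.dist w u < A.dist w v} := by
    ext p
    constructor
    · rintro ⟨hp, w, rfl⟩
      exact ⟨w, show A.dist w u < A.dist w v by rwa [← hd, ← hd], rfl⟩
    · rintro ⟨w, hw, rfl⟩
      exact ⟨show B.dist (f w) (f u) < B.dist (f w) (f v) by rwa [hd, hd], w, rfl⟩
  rw [closerCount_eq_ncard, closerCount_eq_ncard,
    ← Set.ncard_inter_add_ncard_sdiff_eq_ncard _ (Set.range f), himage,
    Set.ncard_image_of_injective _ hf]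
  rfl

lemma mostarTerm_map_le_of_isometry [Finite β] (hf : Injective f)
    (hd : ∀ u v, B.dist (f u) (f v) = A.dist u v) (e : Sym2 α) :
    mostarTerm B (e.map f) ≤ mostarTerm A e + (Nat.card β - Nat.card α) := by
  have houtside : ∀ u v : α,
      {p | B.dist p (f u) < B.dist p (f v) ∧ p ∉ Set.range f}.ncard ≤ Nat.card β - Nat.card α :=
    fun u v => calc
      _ ≤ (Set.range f)ᶜ.ncard := Set.ncard_le_ncard fun _ hp => hp.2
      _ = Nat.card β - Nat.card α := by rw [Set.ncard_compl, Set.ncard_range_of_injective hf]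
  induction e with
  | _ u v =>
    have := closerCount_eq_add_of_isometry hf hd u v
    have := closerCount_eq_add_of_isometry hf hd v u
    have := houtside u v
    have := houtside v u
    simp only [Sym2.map_mk, mostarTerm, Sym2.lift_mk]
    omega

lemma mostar_eq_sum_edgeSet [Finite α] (H : SimpleGraph α) [Fintype H.edgeSet] :
    mostar H = ∑ e : H.edgeSet, mostarTerm H e := by
  classical
  rw [mostar, Finset.sum_set_coe]
  congr 1
  ext e
  simp [SimpleGraph.mem_edgeFinset]

end Mostar

theorem mostar_le_of_sigma_edgeSet_equiv {ι : Type*} [Fintype ι] {V : ι → Type*}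
    [∀ i, Finite (V i)] {W : Type*} [Finite W] {A : ∀ i, SimpleGraph (V i)} {B : SimpleGraph W}
    {f : ∀ i, V i → W} (hf : ∀ i, Injective (f i))
    (hd : ∀ i u v, B.dist (f i u) (f i v) = (A i).dist u v)
    (φ : (Σ i, (A i).edgeSet) ≃ B.edgeSet) (hφ : ∀ p, (φ p : Sym2 W) = p.2.1.map (f p.1)) :
    mostar B ≤ ∑ i, (mostar (A i) + Nat.card (A i).edgeSet * (Nat.card W - Nat.card (V i))) := by
  classical
  have := Fintype.ofFinite W
  have (i : ι) := Fintype.ofFinite (V i)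
  calc mostar B
      = ∑ p : Σ i, (A i).edgeSet, mostarTerm B (φ p) := by
        rw [mostar_eq_sum_edgeSet, φ.sum_comp (fun e => mostarTerm B e)]
    _ = ∑ i, ∑ e : (A i).edgeSet, mostarTerm B (e.1.map (f i)) := by
        rw [← Finset.univ_sigma_univ, Finset.sum_sigma]
        simp only [hφ]
    _ ≤ ∑ i, ∑ e : (A i).edgeSet, (mostarTerm (A i) e + (Nat.card W - Nat.card (V i))) := by
        gcongr with i _ e
        exact mostarTerm_map_le_of_isometry (hf i) (hd i) e
    _ = _ := by
        simp only [Finset.sum_add_distrib, Finset.sum_const, ← mostar_eq_sum_edgeSet,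
          Finset.card_univ, smul_eq_mul, Nat.card_eq_fintype_card]

section Chain

variable {n : ℕ} {V : ℕ → Type*} {G : ∀ i, SimpleGraph (V i)} {x y : ∀ i, V i}

abbrev ChainVertex (n : ℕ) (V : ℕ → Type*) (x : ∀ i, V i) :=
  (i : Fin n) × {v : V i.val // i.val = 0 ∨ v ≠ x i.val}

open Classical in
/-- The vertex of the chain represented by `v ∈ V i`: for `i ≥ 1`, `x i` is stored as `y (i - 1)`. -/
noncomputable def chainEmb (x y : ∀ i, V i) (hxy : ∀ i < n, x i ≠ y i) (i : Fin n) (v : V i) :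
    ChainVertex n V x :=
  if h : i.val ≠ 0 ∧ v = x i then
    ⟨⟨i - 1, by omega⟩, y (i - 1), Or.inr (hxy _ (by omega)).symm⟩
  else ⟨i, v, by tauto⟩

lemma chainEmb_of_ne (hxy : ∀ i < n, x i ≠ y i) (i : Fin n) {v : V i}
    (h : i.val = 0 ∨ v ≠ x i) : chainEmb x y hxy i v = ⟨i, v, h⟩ := by
  rw [chainEmb, dif_neg (by tauto)]

lemma chainEmb_x (hxy : ∀ i < n, x i ≠ y i) {i j : Fin n} (hij : j.val = i + 1)
    (a : {v : V i // i.val = 0 ∨ v ≠ x i}) (ha : a.1 = y i) :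
    chainEmb x y hxy j (x j) = ⟨i, a⟩ := by
  rw [chainEmb, dif_pos ⟨by omega, rfl⟩]
  obtain ⟨i, hi⟩ := i
  obtain rfl : i = j - 1 := by simp only at hij; omega
  exact congrArg _ (Subtype.ext ha.symm)

lemma chainEmb_fst_le (hxy : ∀ i < n, x i ≠ y i) (i : Fin n) (v : V i) :
    (chainEmb x y hxy i v).1 ≤ i := by
  unfold chainEmb
  split_ifs
  · exact Fin.le_def.mpr (by simp)
  · exact le_rfl

def chainRetr (x y : ∀ i, V i) (i : Fin n) (p : ChainVertex n V x) : V i :=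
  if p.1.val < i then x i
  else if h : p.1.val = i then cast (congrArg V h) p.2.1
  else y i

lemma chainRetr_of_lt {i : Fin n} {p : ChainVertex n V x} (h : p.1.val < i) :
    chainRetr x y i p = x i := by
  rw [chainRetr, if_pos h]

lemma chainRetr_self {i : Fin n} (v : {v : V i // i.val = 0 ∨ v ≠ x i}) :
    chainRetr x y i ⟨i, v⟩ = v.1 := by
  rw [chainRetr, if_neg (lt_irrefl _), dif_pos rfl, cast_eq]

lemma chainRetr_of_gt {i : Fin n} {p : ChainVertex n V x} (h : i.val < p.1) :
    chainRetr x y i p = y i := by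
  rw [chainRetr, if_neg (by omega), dif_neg (by omega)]

lemma chainRetr_chainEmb (hxy : ∀ i < n, x i ≠ y i) (i : Fin n) (v : V i) :
    chainRetr x y i (chainEmb x y hxy i v) = v := by
  by_cases h : i.val ≠ 0 ∧ v = x i
  · rw [chainEmb, dif_pos h, chainRetr_of_lt (by simp; omega), h.2]
  · rw [chainEmb, dif_neg h, chainRetr_self]

lemma chainEmb_injective (hxy : ∀ i < n, x i ≠ y i) (i : Fin n) :
    Function.Injective (chainEmb x y hxy i) :=
  Function.LeftInverse.injective (chainRetr_chainEmb hxy i)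

lemma chainGraph_adj_chainEmb (hxy : ∀ i < n, x i ≠ y i) (i : Fin n) {a b : V i}
    (hab : (G i).Adj a b) :
    (chainGraph n V G x y).Adj (chainEmb x y hxy i a) (chainEmb x y hxy i b) := by
  have of_eq_x : ∀ a b : V i, (G i).Adj a b → i.val ≠ 0 ∧ a = x i →
      (chainGraph n V G x y).Adj (chainEmb x y hxy i a) (chainEmb x y hxy i b) := by
    rintro a b hab ⟨hi, rfl⟩
    have hb : i.val = 0 ∨ b ≠ x i := Or.inr hab.ne.symm
    rw [chainEmb, dif_pos ⟨hi, rfl⟩, chainEmb_of_ne hxy i hb]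
    exact Or.inr ⟨_, i, _, ⟨b, hb⟩, by simp; omega, rfl, hab, Or.inl ⟨rfl, rfl⟩⟩
  by_cases ha : i.val ≠ 0 ∧ a = x i
  · exact of_eq_x a b hab ha
  by_cases hb : i.val ≠ 0 ∧ b = x i
  · exact (of_eq_x b a hab.symm hb).symm
  rw [chainEmb_of_ne hxy i (by tauto), chainEmb_of_ne hxy i (by tauto)]
  exact Or.inl ⟨i, _, _, hab, rfl, rfl⟩

lemma exists_chainEmb_of_chainGraph_adj (hxy : ∀ i < n, x i ≠ y i) {p q : ChainVertex n V x}
    (h : (chainGraph n V G x y).Adj p q) :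
    ∃ (i : Fin n) (a b : V i), (G i).Adj a b ∧ chainEmb x y hxy i a = p ∧
      chainEmb x y hxy i b = q := by
  rcases h with ⟨i, a, b, hab, rfl, rfl⟩ | ⟨i, j, a, b, hj, ha, hb, (⟨rfl, rfl⟩ | ⟨rfl, rfl⟩)⟩
  · exact ⟨i, a, b, hab, chainEmb_of_ne hxy i a.2, chainEmb_of_ne hxy i b.2⟩
  · exact ⟨j, _, b, hb, chainEmb_x hxy hj a ha, chainEmb_of_ne hxy j b.2⟩
  · exact ⟨j, b, _, hb.symm, chainEmb_of_ne hxy j b.2, chainEmb_x hxy hj a ha⟩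

lemma chainRetr_adj_or_eq (i : Fin n) {p q : ChainVertex n V x}
    (h : (chainGraph n V G x y).Adj p q) :
    (G i).Adj (chainRetr x y i p) (chainRetr x y i q) ∨ chainRetr x y i p = chainRetr x y i q := by
  have of_link : ∀ (j k : Fin n) (a : {v : V j // j.val = 0 ∨ v ≠ x j})
      (b : {v : V k // k.val = 0 ∨ v ≠ x k}), k.val = j + 1 → a.1 = y j → (G k).Adj (x k) b.1 →
      (G i).Adj (chainRetr x y i ⟨j, a⟩) (chainRetr x y i ⟨k, b⟩) ∨
        chainRetr x y i ⟨j, a⟩ = chainRetr x y i ⟨k, b⟩ := by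
    intro j k a b hk ha hb
    rcases lt_trichotomy k.val i with hki | hki | hki
    · exact Or.inr (by rw [chainRetr_of_lt (show j.val < i by omega), chainRetr_of_lt hki])
    · obtain rfl : k = i := Fin.ext hki
      exact Or.inl (by rwa [chainRetr_of_lt (show j.val < k by omega), chainRetr_self])
    · rcases (by omega : j.val = i ∨ i < j.val) with hji | hji
      · obtain rfl : j = i := Fin.ext hji
        exact Or.inr (by rw [chainRetr_self, chainRetr_of_gt hki, ha])
      · exact Or.inr (by rw [chainRetr_of_gt hji, chainRetr_of_gt hki])
  rcases h with ⟨j, a, b, hab, rfl, rfl⟩ | ⟨j, k, a, b, hk, ha, hb, (⟨rfl, rfl⟩ | ⟨rfl, rfl⟩)⟩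
  · rcases lt_trichotomy j.val i with hji | hji | hji
    · exact Or.inr (by rw [chainRetr_of_lt hji, chainRetr_of_lt hji])
    · obtain rfl : j = i := Fin.ext hji
      exact Or.inl (by rwa [chainRetr_self, chainRetr_self])
    · exact Or.inr (by rw [chainRetr_of_gt hji, chainRetr_of_gt hji])
  · exact of_link j k a b hk ha hb
  · exact (of_link j k a b hk ha hb).imp SimpleGraph.Adj.symm Eq.symm

lemma dist_chainEmb (hconn : ∀ i < n, (G i).Connected) (hxy : ∀ i < n, x i ≠ y i)
    (i : Fin n) (u v : V i) :
    (chainGraph n V G x y).dist (chainEmb x y hxy i u) (chainEmb x y hxy i v) = (G i).dist u v := by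
  have hr : (G i).Reachable u v := (hconn i i.isLt).preconnected u v
  refine le_antisymm
    (SimpleGraph.dist_le_of_adj_or_eq _ (fun u v h => Or.inl (chainGraph_adj_chainEmb hxy i h)) hr) ?_
  have hrC : (chainGraph n V G x y).Reachable (chainEmb x y hxy i u) (chainEmb x y hxy i v) :=
    hr.map ⟨chainEmb x y hxy i, fun h => chainGraph_adj_chainEmb hxy i h⟩
  simpa only [chainRetr_chainEmb] using
    SimpleGraph.dist_le_of_adj_or_eq (chainRetr x y i) (fun p q h => chainRetr_adj_or_eq i h) hrC

end Chain

section ChainEdges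

variable {n : ℕ} {V : ℕ → Type*} {G : ∀ i, SimpleGraph (V i)} {x y : ∀ i, V i}

lemma exists_mem_map_chainEmb_fst_eq (hxy : ∀ i < n, x i ≠ y i) (i : Fin n) {e : Sym2 (V i)}
    (he : e ∈ (G i).edgeSet) : ∃ p ∈ e.map (chainEmb x y hxy i), p.1 = i := by
  induction e with
  | _ a b =>
    by_cases ha : a = x i
    · refine ⟨_, Sym2.mem_map.2 ⟨b, Sym2.mem_mk_right a b, rfl⟩, ?_⟩
      rw [chainEmb_of_ne hxy i (Or.inr (ha ▸ (G i).ne_of_adj he).symm)]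
    · refine ⟨_, Sym2.mem_map.2 ⟨a, Sym2.mem_mk_left a b, rfl⟩, ?_⟩
      rw [chainEmb_of_ne hxy i (Or.inr ha)]

lemma eq_of_map_chainEmb_eq (hxy : ∀ i < n, x i ≠ y i) {i j : Fin n} {e : Sym2 (V i)}
    {f : Sym2 (V j)} (he : e ∈ (G i).edgeSet) (hf : f ∈ (G j).edgeSet)
    (h : e.map (chainEmb x y hxy i) = f.map (chainEmb x y hxy j)) : i = j := by
  have le_of_eq : ∀ {i j : Fin n} {e : Sym2 (V i)} {f : Sym2 (V j)}, e ∈ (G i).edgeSet →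
      e.map (chainEmb x y hxy i) = f.map (chainEmb x y hxy j) → i ≤ j := by
    intro i j e f he h
    obtain ⟨p, hp, rfl⟩ := exists_mem_map_chainEmb_fst_eq hxy i he
    obtain ⟨v, -, rfl⟩ := Sym2.mem_map.1 (h ▸ hp)
    exact chainEmb_fst_le hxy j v
  exact le_antisymm (le_of_eq he h) (le_of_eq hf h.symm)

noncomputable def chainEdgeMap (hxy : ∀ i < n, x i ≠ y i) (p : Σ i : Fin n, (G i).edgeSet) :
    (chainGraph n V G x y).edgeSet :=
  ⟨p.2.1.map (chainEmb x y hxy p.1), by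
    obtain ⟨i, e, he⟩ := p
    induction e with
    | _ a b => exact chainGraph_adj_chainEmb hxy i he⟩

lemma chainEdgeMap_bijective (hxy : ∀ i < n, x i ≠ y i) :
    Function.Bijective (chainEdgeMap (G := G) hxy) := by
  constructor
  · rintro ⟨i, e, he⟩ ⟨j, f, hf⟩ h
    have h' := congrArg Subtype.val h
    obtain rfl := eq_of_map_chainEmb_eq hxy he hf h'
    obtain rfl := Sym2.map.injective (chainEmb_injective hxy i) h'
    rfl
  · rintro ⟨e, he⟩
    induction e with
    | _ p q =>
      obtain ⟨i, a, b, hab, rfl, rfl⟩ := exists_chainEmb_of_chainGraph_adj hxy he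
      exact ⟨⟨i, s(a, b), hab⟩, rfl⟩

end ChainEdges

theorem mostar_chainGraph_le_general (n : ℕ) (V : ℕ → Type*) [∀ i, Finite (V i)]
    (G : ∀ i, SimpleGraph (V i)) (hconn : ∀ i < n, (G i).Connected) (x y : ∀ i, V i)
    (hxy : ∀ i < n, x i ≠ y i) :
    mostar (chainGraph n V G x y) ≤
      (∑ i ∈ range n, mostar (G i)) +
      ∑ i ∈ range n, Nat.card (G i).edgeSet *
        (Nat.card ((i : Fin n) × {v : V i.val // i.val = 0 ∨ v ≠ x i.val}) - Nat.card (V i)) := by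
  rw [← sum_add_distrib, ← Fin.sum_univ_eq_sum_range]
  exact mostar_le_of_sigma_edgeSet_equiv (chainEmb_injective hxy) (dist_chainEmb hconn hxy)
    (Equiv.ofBijective _ (chainEdgeMap_bijective hxy)) fun _ => rfl

theorem mostar_chainGraph_le (n : ℕ) (hn : 1 ≤ n) (V : ℕ → Type*) [∀ i, Finite (V i)]
    (G : ∀ i, SimpleGraph (V i)) (hconn : ∀ i < n, (G i).Connected) (x y : ∀ i, V i)
    (hxy : ∀ i < n, x i ≠ y i) :
    mostar (chainGraph n V G x y) ≤
      (∑ i ∈ range n, mostar (G i)) +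
      ∑ i ∈ range n, Nat.card (G i).edgeSet *
        (Nat.card ((i : Fin n) × {v : V i.val // i.val = 0 ∨ v ≠ x i.val}) - Nat.card (V i)) :=
  mostar_chainGraph_le_general n V G hconn x y hxy
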